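/- The function ξ satisfies lim_{y → 0⁺} ξ(y)/y⁴ = k₂ θ²/12. -/

import Mathlib

/-- `ξ(y) = k₂ y² − (2k₂/θ) ((e^{θy}+e^{−θy}−2)/(e^{θy}−e^{−θy})) y`. -/
noncomputable def xiFun (θ k₂ y : ℝ) : ℝ :=
  k₂ * y ^ 2 -
    (2 * k₂ / θ) *
      ((Real.exp (θ * y) + Real.exp (-(θ * y)) - 2) /
        (Real.exp (θ * y) - Real.exp (-(θ * y)))) * y

/-!
Since `(e^x + e^{-x} - 2)/(e^x - e^{-x}) = (cosh x - 1)/sinh x = tanh (x/2)`, putting `u = θy/2`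
gives `ξ(y)/y⁴ = (k₂θ²/4) (u - tanh u)/u³`. As `(u - tanh u)' = tanh² u`, one application of
l'Hôpital's rule reduces `(u - tanh u)/u³ → 1/3` to `tanh u / u → 1`, i.e. to `tanh' 0 = 1`.
-/

open Real Filter Topology

theorem Real.hasDerivAt_tanh (x : ℝ) : HasDerivAt tanh (1 / cosh x ^ 2) x := by
  rw [show tanh = sinh / cosh from funext tanh_eq_sinh_div_cosh]
  refine ((hasDerivAt_sinh x).div (hasDerivAt_cosh x) (cosh_pos x).ne').congr_deriv ?_
  rw [← sq, ← sq, cosh_sq]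
  ring

theorem Real.one_sub_one_div_cosh_sq (x : ℝ) : 1 - 1 / cosh x ^ 2 = tanh x ^ 2 := by
  rw [tanh_eq_sinh_div_cosh, div_pow, cosh_sq]
  field_simp
  ring

theorem Real.cosh_sub_one_div_sinh (x : ℝ) : (cosh x - 1) / sinh x = tanh (x / 2) := by
  obtain ⟨y, rfl⟩ : ∃ y, x = 2 * y := ⟨x / 2, by ring⟩
  rw [mul_div_cancel_left₀ y two_ne_zero, cosh_two_mul, sinh_two_mul, tanh_eq_sinh_div_cosh,
    cosh_sq]
  rcases eq_or_ne (sinh y) 0 with h | h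
  · simp [h]
  · have := (cosh_pos y).ne'
    field_simp
    ring

theorem Real.tendsto_tanh_div_self : Tendsto (fun x => tanh x / x) (𝓝[≠] 0) (𝓝 1) := by
  have h := hasDerivAt_iff_tendsto_slope.mp (hasDerivAt_tanh 0)
  simp only [cosh_zero, one_pow, div_one] at h
  refine h.congr fun x => ?_
  simp [slope_def_field, tanh_zero]

theorem Real.tendsto_sub_tanh_div_pow_three :
    Tendsto (fun x => (x - tanh x) / x ^ 3) (𝓝[≠] 0) (𝓝 (1 / 3)) := by
  have hcont : Continuous fun x => x - tanh x := by
    simp only [tanh_eq_sinh_div_cosh]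
    exact continuous_id.sub (continuous_sinh.div continuous_cosh fun x => (cosh_pos x).ne')
  refine HasDerivAt.lhopital_zero_nhdsNE (f' := fun x => tanh x ^ 2) (g' := fun x => 3 * x ^ 2)
    ?_ ?_ ?_ ?_ ?_ ?_
  · exact Eventually.of_forall fun x =>
      ((hasDerivAt_id' x).sub (hasDerivAt_tanh x)).congr_deriv (one_sub_one_div_cosh_sq x)
  · exact Eventually.of_forall fun x => by simpa using hasDerivAt_pow 3 x
  · filter_upwards [self_mem_nhdsWithin] with x hx
    exact mul_ne_zero three_ne_zero (pow_ne_zero 2 hx)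
  · simpa [tanh_zero] using hcont.continuousWithinAt.tendsto (x := 0) (s := {0}ᶜ)
  · simpa using (continuous_pow 3).continuousWithinAt.tendsto (x := (0 : ℝ)) (s := {0}ᶜ)
  · have h := (tendsto_tanh_div_self.pow 2).div_const 3
    rw [one_pow] at h
    refine h.congr' ?_
    filter_upwards [self_mem_nhdsWithin] with x hx
    field_simp

theorem xiFun_eq (θ k₂ y : ℝ) (hθ : θ ≠ 0) :
    xiFun θ k₂ y = 2 * k₂ * y / θ * (θ * y / 2 - tanh (θ * y / 2)) := by
  have hexp : (exp (θ * y) + exp (-(θ * y)) - 2) / (exp (θ * y) - exp (-(θ * y)))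
      = (cosh (θ * y) - 1) / sinh (θ * y) := by
    rw [show exp (θ * y) + exp (-(θ * y)) - 2 = 2 * (cosh (θ * y) - 1) by rw [cosh_eq]; ring,
      show exp (θ * y) - exp (-(θ * y)) = 2 * sinh (θ * y) by rw [sinh_eq]; ring,
      mul_div_mul_left _ _ two_ne_zero]
  rw [xiFun, hexp, cosh_sub_one_div_sinh]
  field_simp

theorem tendsto_xiFun_div_pow_four (θ k₂ : ℝ) (hθ : θ ≠ 0) :
    Tendsto (fun y => xiFun θ k₂ y / y ^ 4) (𝓝[≠] 0) (𝓝 (k₂ * θ ^ 2 / 12)) := by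
  have hscale : Tendsto (fun y => θ * y / 2) (𝓝[≠] 0) (𝓝[≠] 0) := by
    refine tendsto_nhdsWithin_of_tendsto_nhds_of_eventually_within _ ?_ ?_
    · exact (((continuous_const_mul θ).div_const 2).tendsto' 0 0 (by simp)).mono_left
        nhdsWithin_le_nhds
    · filter_upwards [self_mem_nhdsWithin] with y hy
      simpa [hθ] using hy
  have h := (tendsto_sub_tanh_div_pow_three.comp hscale).const_mul (k₂ * θ ^ 2 / 4)
  rw [show k₂ * θ ^ 2 / 4 * (1 / 3) = k₂ * θ ^ 2 / 12 by ring] at h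
  refine h.congr' ?_
  filter_upwards [self_mem_nhdsWithin] with y hy
  rw [Function.comp_apply, xiFun_eq θ k₂ y hθ]
  field_simp
  ring

theorem stmt_9_general (θ k₂ : ℝ) (hθ : 0 < θ) :
    Filter.Tendsto (fun y => xiFun θ k₂ y / y ^ 4) (nhdsWithin 0 (Set.Ioi 0))
      (nhds (k₂ * θ ^ 2 / 12)) :=
  (tendsto_xiFun_div_pow_four θ k₂ hθ.ne').mono_left (nhdsGT_le_nhdsNE 0)

theorem stmt_9 (θ k₂ : ℝ) (hθ : 0 < θ) (hk : 0 < k₂) :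
    Filter.Tendsto (fun y => xiFun θ k₂ y / y ^ 4) (nhdsWithin 0 (Set.Ioi 0))
      (nhds (k₂ * θ ^ 2 / 12)) :=
  stmt_9_general θ k₂ hθ
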